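/- arXiv:1606.06745 — 3 statements merged into one kernel-verified Lean document; each statement's English description precedes it below -/
import Mathlib

section
/- Let 0 < p₁ < p₂ ≤ ∞, 0 < θ₁, θ₂ ≤ ∞, let v₁, v₂ be weights on ℝⁿ, and let ω₁, ω₂ be nonnegative measurable functions on (0,∞) with 0 < ‖ω₁‖_{θ₁,(0,t)} < ∞ and 0 < ‖ω₂‖_{θ₂,(t,∞)} < ∞ for all t > 0. If there is a constant c > 0 such that ‖ ‖f‖_{p₂,v₂,B(0,t)} ‖_{θ₂,ω₂,(0,∞)} ≤ c ‖ ‖f‖_{p₁,v₁,ᶜB(0,t)} ‖_{θ₁,ω₁,(0,∞)} for all nonnegative measurable f, then for every τ > 0 the embedding L_{p₁}(v₁, B(0,τ)) ↪ L_{p₂}(v₂, B(0,τ)) holds with constant c ‖ω₁‖_{θ₁,(0,τ)} / ‖ω₂‖_{θ₂,(τ,∞)}; that is, ‖f‖_{p₂,v₂,B(0,τ)} ≤ c (‖ω₁‖_{θ₁,(0,τ)}/‖ω₂‖_{θ₂,(τ,∞)}) ‖f‖_{p₁,v₁,B(0,τ)} for all f supported in B(0,τ). -/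
open MeasureTheory ENNReal Set Metric

noncomputable def Lnorm {α : Type*} [MeasurableSpace α] (p : ℝ≥0∞) (f : α → ℝ≥0∞)
    (μ : Measure α) : ℝ≥0∞ :=
  if p = ∞ then essSup f μ else (∫⁻ x, f x ^ p.toReal ∂μ) ^ (1 / p.toReal)

/-! The test function `f` is supported in `B(0,τ)`, so on the right-hand side only the weights
`t < τ` contribute, each with an inner norm at most `‖f‖_{p₁,v₁,B(0,τ)}`; on the left-hand side
every `t > τ` contributes the full norm `‖f‖_{p₂,v₂,B(0,τ)}`. Comparing the two bounds and
dividing by `‖ω₂‖_{θ₂,(τ,∞)}` gives the claim. -/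

section Lnorm

variable {α : Type*} [MeasurableSpace α] {p : ℝ≥0∞} {f g : α → ℝ≥0∞} {μ ν : Measure α}

lemma Lnorm_mono_measure (h : μ ≤ ν) : Lnorm p f μ ≤ Lnorm p f ν := by
  unfold Lnorm
  split
  · exact essSup_mono_measure' h
  · exact rpow_le_rpow (lintegral_mono' h le_rfl) (by positivity)

lemma Lnorm_mono_ae (h : f ≤ᵐ[μ] g) : Lnorm p f μ ≤ Lnorm p g μ := by
  unfold Lnorm
  split
  · exact essSup_mono_ae h
  · refine rpow_le_rpow (lintegral_mono_ae ?_) (by positivity)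
    filter_upwards [h] with x hx
    exact rpow_le_rpow hx toReal_nonneg

lemma Lnorm_zero_measure (hp : p ≠ 0) : Lnorm p f 0 = 0 := by
  unfold Lnorm
  split_ifs with hp'
  · exact essSup_measure_zero
  · rw [lintegral_zero_measure, zero_rpow_of_pos (by simp [toReal_pos hp hp'])]

lemma const_mul_Lnorm_le (hp : p ≠ 0) (a : ℝ≥0∞) :
    a * Lnorm p f μ ≤ Lnorm p (fun x => a * f x) μ := by
  unfold Lnorm
  split_ifs with hp'
  · exact essSup_const_mul.ge
  · have hpt : 0 < p.toReal := toReal_pos hp hp'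
    calc a * (∫⁻ x, f x ^ p.toReal ∂μ) ^ (1 / p.toReal)
        = (a ^ p.toReal * ∫⁻ x, f x ^ p.toReal ∂μ) ^ (1 / p.toReal) := by
          rw [mul_rpow_of_nonneg _ _ (by positivity), ← rpow_mul, mul_one_div_cancel hpt.ne',
            rpow_one]
      _ ≤ (∫⁻ x, (a * f x) ^ p.toReal ∂μ) ^ (1 / p.toReal) := by
          simp_rw [mul_rpow_of_nonneg _ _ hpt.le]
          exact rpow_le_rpow (lintegral_const_mul_le _ _) (by positivity)

lemma Lnorm_const_mul (hp : p ≠ 0) (hf : Measurable f) (a : ℝ≥0∞) :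
    Lnorm p (fun x => a * f x) μ = a * Lnorm p f μ := by
  unfold Lnorm
  split_ifs with hp'
  · exact essSup_const_mul
  · have hpt : 0 < p.toReal := toReal_pos hp hp'
    simp_rw [mul_rpow_of_nonneg _ _ hpt.le]
    rw [lintegral_const_mul _ (hf.pow_const _), mul_rpow_of_nonneg _ _ (by positivity),
      ← rpow_mul, mul_one_div_cancel hpt.ne', rpow_one]

lemma Lnorm_add_measure_of_ae_eq_zero (hp : p ≠ 0) (h : f =ᵐ[ν] 0) :
    Lnorm p f (μ + ν) = Lnorm p f μ := by
  unfold Lnorm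
  split_ifs with hp'
  · refine le_antisymm (essSup_le_of_ae_le _ ?_)
      (essSup_mono_measure' (Measure.le_add_right le_rfl))
    refine ae_add_measure_iff.2 ⟨ae_le_essSup f, ?_⟩
    filter_upwards [h] with x hx
    simp [hx]
  · have hpt : 0 < p.toReal := toReal_pos hp hp'
    have hν : ∫⁻ x, f x ^ p.toReal ∂ν = 0 := by
      rw [lintegral_congr_ae (g := 0) (by filter_upwards [h] with x hx; simp [hx, hpt]),
        lintegral_zero_fun]
    rw [lintegral_add_measure, hν, add_zero]

lemma Lnorm_eq_zero_of_ae_eq_zero (hp : p ≠ 0) (h : f =ᵐ[μ] 0) : Lnorm p f μ = 0 := by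
  simpa [Lnorm_zero_measure hp] using Lnorm_add_measure_of_ae_eq_zero (μ := 0) hp h

lemma Lnorm_restrict_of_eq_zero_compl (hp : p ≠ 0) {s : Set α} (hs : MeasurableSet s)
    (h : ∀ x ∉ s, f x = 0) : Lnorm p f (μ.restrict s) = Lnorm p f μ := by
  conv_rhs => rw [← Measure.restrict_add_restrict_compl (μ := μ) hs]
  refine (Lnorm_add_measure_of_ae_eq_zero hp ?_).symm
  exact (ae_restrict_iff' hs.compl).2 (.of_forall h)

end Lnorm

section Radial

variable {θ : ℝ≥0∞} {ω : ℝ → ℝ≥0∞} {F : ℝ → ℝ≥0∞} {τ : ℝ}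

lemma mul_Lnorm_Ioi_le_of_monotone (hθ : θ ≠ 0) (hF : Monotone F) (hτ : 0 ≤ τ) :
    F τ * Lnorm θ ω (volume.restrict (Ioi τ)) ≤
      Lnorm θ (fun t => F t * ω t) (volume.restrict (Ioi 0)) :=
  calc F τ * Lnorm θ ω (volume.restrict (Ioi τ))
      ≤ Lnorm θ (fun t => F τ * ω t) (volume.restrict (Ioi τ)) := const_mul_Lnorm_le hθ _
    _ ≤ Lnorm θ (fun t => F t * ω t) (volume.restrict (Ioi τ)) :=
        Lnorm_mono_ae <| (ae_restrict_iff' measurableSet_Ioi).2 <|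
          .of_forall fun _ ht => mul_le_mul_left (hF (le_of_lt ht)) _
    _ ≤ Lnorm θ (fun t => F t * ω t) (volume.restrict (Ioi 0)) :=
        Lnorm_mono_measure (Measure.restrict_mono (Ioi_subset_Ioi hτ) le_rfl)

lemma Lnorm_mul_le_of_eq_zero_of_le (hθ : θ ≠ 0) (hω : Measurable ω) {a : ℝ≥0∞}
    (hF_zero : ∀ t, τ ≤ t → F t = 0) (hF_le : ∀ t, F t ≤ a) :
    Lnorm θ (fun t => F t * ω t) (volume.restrict (Ioi 0)) ≤
      a * Lnorm θ ω (volume.restrict (Ioo 0 τ)) := by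
  have hsupp : ∀ t ∉ Iio τ, F t * ω t = 0 := fun t ht => by
    rw [hF_zero t (not_lt.1 ht), zero_mul]
  rw [← Lnorm_restrict_of_eq_zero_compl hθ measurableSet_Iio hsupp,
    Measure.restrict_restrict measurableSet_Iio, Iio_inter_Ioi, ← Lnorm_const_mul hθ hω]
  exact Lnorm_mono_ae (.of_forall fun t => mul_le_mul_left (hF_le t) _)

end Radial

section Ball

variable {E : Type*} [NormedAddCommGroup E] [MeasurableSpace E] {μ : Measure E} {p : ℝ≥0∞}
  {g : E → ℝ≥0∞}

lemma monotone_Lnorm_restrict_ball : Monotone fun t => Lnorm p g (μ.restrict (ball 0 t)) :=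
  fun _ _ hst => Lnorm_mono_measure (Measure.restrict_mono (ball_subset_ball hst) le_rfl)

variable [OpensMeasurableSpace E] {τ : ℝ}

lemma Lnorm_restrict_norm_ge_eq_zero (hp : p ≠ 0) (hg : ∀ x ∉ ball (0 : E) τ, g x = 0)
    {t : ℝ} (ht : τ ≤ t) :
    Lnorm p g (μ.restrict {x | t ≤ ‖x‖}) = 0 := by
  refine Lnorm_eq_zero_of_ae_eq_zero hp <|
    (ae_restrict_iff' (measurableSet_le measurable_const measurable_norm)).2 (.of_forall ?_)
  intro x hx
  exact hg x (by simpa using ht.trans hx)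

lemma Lnorm_restrict_le_Lnorm_restrict_ball (hp : p ≠ 0) (hg : ∀ x ∉ ball (0 : E) τ, g x = 0)
    (s : Set E) :
    Lnorm p g (μ.restrict s) ≤ Lnorm p g (μ.restrict (ball 0 τ)) := by
  rw [Lnorm_restrict_of_eq_zero_compl hp measurableSet_ball hg]
  exact Lnorm_mono_measure Measure.restrict_le_self

end Ball

theorem stmt4_general {n : ℕ} (p₁ p₂ θ₁ θ₂ : ℝ≥0∞)
    (hp₁ : 0 < p₁) (hθ₁ : 0 < θ₁) (hθ₂ : 0 < θ₂)
    (v₁ v₂ : EuclideanSpace ℝ (Fin n) → ℝ≥0∞)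
    (ω₁ ω₂ : ℝ → ℝ≥0∞) (hω₁ : Measurable ω₁)
    (hω₂norm : ∀ t : ℝ, 0 < t →
      0 < Lnorm θ₂ ω₂ (volume.restrict (Ioi t)) ∧ Lnorm θ₂ ω₂ (volume.restrict (Ioi t)) < ∞)
    (c : ℝ≥0∞)
    (hemb : ∀ f : EuclideanSpace ℝ (Fin n) → ℝ≥0∞, Measurable f →
      Lnorm θ₂
          (fun t => Lnorm p₂ (fun x => f x * v₂ x)
              (volume.restrict (ball (0 : EuclideanSpace ℝ (Fin n)) t)) * ω₂ t)
          (volume.restrict (Ioi (0 : ℝ)))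
        ≤ c * Lnorm θ₁
            (fun t => Lnorm p₁ (fun x => f x * v₁ x)
                (volume.restrict {x : EuclideanSpace ℝ (Fin n) | t ≤ ‖x‖}) * ω₁ t)
            (volume.restrict (Ioi (0 : ℝ)))) :
    ∀ τ : ℝ, 0 < τ → ∀ f : EuclideanSpace ℝ (Fin n) → ℝ≥0∞, Measurable f →
      (∀ x ∉ ball (0 : EuclideanSpace ℝ (Fin n)) τ, f x = 0) →
      Lnorm p₂ (fun x => f x * v₂ x)
          (volume.restrict (ball (0 : EuclideanSpace ℝ (Fin n)) τ))
        ≤ c * (Lnorm θ₁ ω₁ (volume.restrict (Ioo (0 : ℝ) τ))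
              / Lnorm θ₂ ω₂ (volume.restrict (Ioi τ)))
            * Lnorm p₁ (fun x => f x * v₁ x)
                (volume.restrict (ball (0 : EuclideanSpace ℝ (Fin n)) τ)) := by
  intro τ hτ f hf hsupp
  have hfv₁ : ∀ x ∉ ball (0 : EuclideanSpace ℝ (Fin n)) τ, f x * v₁ x = 0 := fun x hx => by
    rw [hsupp x hx, zero_mul]
  have lower := mul_Lnorm_Ioi_le_of_monotone (ω := ω₂) hθ₂.ne'
    (monotone_Lnorm_restrict_ball (p := p₂) (g := fun x => f x * v₂ x) (μ := volume)) hτ.le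
  have upper := Lnorm_mul_le_of_eq_zero_of_le hθ₁.ne' hω₁
    (fun t ht => Lnorm_restrict_norm_ge_eq_zero hp₁.ne' hfv₁ (μ := volume) ht)
    (fun t => Lnorm_restrict_le_Lnorm_restrict_ball hp₁.ne' hfv₁ {x | t ≤ ‖x‖})
  obtain ⟨hW₂pos, hW₂fin⟩ := hω₂norm τ hτ
  rw [mul_comm c, mul_assoc, ← ENNReal.mul_div_right_comm, mul_comm,
    ENNReal.le_div_iff_mul_le (.inl hW₂pos.ne') (.inl hW₂fin.ne)]
  calc _ ≤ _ := lower
    _ ≤ _ := hemb f hf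
    _ ≤ _ := mul_le_mul_right upper c
    _ = _ := by ring

theorem stmt4 {n : ℕ} (p₁ p₂ θ₁ θ₂ : ℝ≥0∞)
    (hp₁ : 0 < p₁) (hp₁₂ : p₁ < p₂) (hθ₁ : 0 < θ₁) (hθ₂ : 0 < θ₂)
    (v₁ v₂ : EuclideanSpace ℝ (Fin n) → ℝ≥0∞) (hv₁ : Measurable v₁) (hv₂ : Measurable v₂)
    (hv₁pos : ∀ᵐ x ∂(volume : Measure (EuclideanSpace ℝ (Fin n))), 0 < v₁ x ∧ v₁ x < ∞)
    (hv₂pos : ∀ᵐ x ∂(volume : Measure (EuclideanSpace ℝ (Fin n))), 0 < v₂ x ∧ v₂ x < ∞)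
    (ω₁ ω₂ : ℝ → ℝ≥0∞) (hω₁ : Measurable ω₁) (hω₂ : Measurable ω₂)
    (hω₁norm : ∀ t : ℝ, 0 < t →
      0 < Lnorm θ₁ ω₁ (volume.restrict (Ioo (0 : ℝ) t)) ∧
        Lnorm θ₁ ω₁ (volume.restrict (Ioo (0 : ℝ) t)) < ∞)
    (hω₂norm : ∀ t : ℝ, 0 < t →
      0 < Lnorm θ₂ ω₂ (volume.restrict (Ioi t)) ∧ Lnorm θ₂ ω₂ (volume.restrict (Ioi t)) < ∞)
    (c : ℝ≥0∞) (hc : 0 < c)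
    (hemb : ∀ f : EuclideanSpace ℝ (Fin n) → ℝ≥0∞, Measurable f →
      Lnorm θ₂
          (fun t => Lnorm p₂ (fun x => f x * v₂ x)
              (volume.restrict (ball (0 : EuclideanSpace ℝ (Fin n)) t)) * ω₂ t)
          (volume.restrict (Ioi (0 : ℝ)))
        ≤ c * Lnorm θ₁
            (fun t => Lnorm p₁ (fun x => f x * v₁ x)
                (volume.restrict {x : EuclideanSpace ℝ (Fin n) | t ≤ ‖x‖}) * ω₁ t)
            (volume.restrict (Ioi (0 : ℝ)))) :
    ∀ τ : ℝ, 0 < τ → ∀ f : EuclideanSpace ℝ (Fin n) → ℝ≥0∞, Measurable f →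
      (∀ x ∉ ball (0 : EuclideanSpace ℝ (Fin n)) τ, f x = 0) →
      Lnorm p₂ (fun x => f x * v₂ x)
          (volume.restrict (ball (0 : EuclideanSpace ℝ (Fin n)) τ))
        ≤ c * (Lnorm θ₁ ω₁ (volume.restrict (Ioo (0 : ℝ) τ))
              / Lnorm θ₂ ω₂ (volume.restrict (Ioi τ)))
            * Lnorm p₁ (fun x => f x * v₁ x)
                (volume.restrict (ball (0 : EuclideanSpace ℝ (Fin n)) τ)) :=
  stmt4_general p₁ p₂ θ₁ θ₂ hp₁ hθ₁ hθ₂ v₁ v₂ ω₁ ω₂ hω₁ hω₂norm c hemb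
end

section
/- Let F, G be nonnegative measurable functions on (0,∞) with F non-increasing. Then the essential suprema satisfy ess sup_{t ∈ (0,∞)} F(t) G(t) = ess sup_{t ∈ (0,∞)} F(t) · (ess sup_{τ ∈ (0,t)} G(τ)). -/
open MeasureTheory ENNReal Set

private lemma jumpCountable10 (F : ℝ → ℝ≥0∞)
    (hFmono : ∀ s t : ℝ, 0 < s → s ≤ t → F t ≤ F s) :
    Set.Countable {t : ℝ | 0 < t ∧ (⨆ n : ℕ, F (t + 1/(n+1 : ℝ))) < F t} := by
  set J := {t : ℝ | 0 < t ∧ (⨆ n : ℕ, F (t + 1/(n+1 : ℝ))) < F t} with hJ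
  have key : ∀ t ∈ J, ∃ q : ℚ,
      (⨆ n : ℕ, F (t + 1/(n+1 : ℝ))) < Real.toNNReal q ∧ (Real.toNNReal q : ℝ≥0∞) < F t := by
    intro t ht
    obtain ⟨q, _, h1, h2⟩ := ENNReal.lt_iff_exists_rat_btwn.mp ht.2
    exact ⟨q, h1, h2⟩
  choose! f hf1 hf2 using key
  have hlt : ∀ a ∈ J, ∀ b ∈ J, a < b →
      (Real.toNNReal (f b) : ℝ≥0∞) < Real.toNNReal (f a) := by
    intro a ha b hb h
    obtain ⟨n, hn⟩ := exists_nat_one_div_lt (sub_pos.2 h)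
    have hpos : (0:ℝ) < a + 1/(n+1 : ℝ) := by
      have := ha.1; positivity
    have h1 : F b ≤ F (a + 1/(n+1 : ℝ)) := hFmono _ b hpos (by linarith)
    have h2 : F b ≤ ⨆ n : ℕ, F (a + 1/(n+1 : ℝ)) :=
      h1.trans (le_iSup (fun n : ℕ => F (a + 1/(n+1 : ℝ))) n)
    exact lt_of_lt_of_le (hf2 b hb) (h2.trans (le_of_lt (hf1 a ha)))
  refine MapsTo.countable_of_injOn (mapsTo_univ f J) ?_ countable_univ
  intro a ha b hb hab
  rcases lt_trichotomy a b with h | h | h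
  · have := hlt a ha b hb h; rw [hab] at this; exact absurd this (lt_irrefl _)
  · exact h
  · have := hlt b hb a ha h; rw [hab] at this; exact absurd this (lt_irrefl _)

theorem stmt10 (F G : ℝ → ℝ≥0∞) (hF : Measurable F) (hG : Measurable G)
    (hFmono : ∀ s t : ℝ, 0 < s → s ≤ t → F t ≤ F s) :
    essSup (fun t => F t * G t) (volume.restrict (Ioi (0 : ℝ)))
      = essSup (fun t => F t * essSup G (volume.restrict (Ioo (0 : ℝ) t)))
          (volume.restrict (Ioi (0 : ℝ))) := by
  set H : ℝ → ℝ≥0∞ := fun t => essSup G (volume.restrict (Ioo (0:ℝ) t)) with hHdef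
  have Hmono : Monotone H := fun a b hab =>
    essSup_mono_measure' (Measure.restrict_mono (Ioo_subset_Ioo le_rfl hab) le_rfl)
  set μ := volume.restrict (Ioi (0:ℝ)) with hμ
  set L := essSup (fun t => F t * G t) μ with hLdef
  set R := essSup (fun t => F t * H t) μ with hRdef
  show L = R
  apply le_antisymm
  · -- L ≤ R
    have hBadae : ∀ᵐ s ∂μ, F s * H s ≤ R := ENNReal.ae_le_essSup _
    have hBadvol : volume ({s : ℝ | ¬ F s * H s ≤ R} ∩ Ioi 0) = 0 := by
      rw [ae_iff] at hBadae
      rwa [hμ, Measure.restrict_apply' measurableSet_Ioi] at hBadae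
    have hNq : ∀ q : ℚ, ∀ᵐ τ : ℝ, ¬(0 < τ ∧ τ < (q:ℝ) ∧ H q < G τ) := by
      intro q
      have h1 : ∀ᵐ τ ∂(volume.restrict (Ioo (0:ℝ) q)), G τ ≤ H q := ENNReal.ae_le_essSup G
      rw [ae_restrict_iff' measurableSet_Ioo] at h1
      filter_upwards [h1] with τ hτ
      rintro ⟨h0, hq, hltq⟩
      exact absurd (hτ ⟨h0, hq⟩) (not_le.mpr hltq)
    have hN : ∀ᵐ τ : ℝ, ∀ q : ℚ, ¬(0 < τ ∧ τ < (q:ℝ) ∧ H q < G τ) := ae_all_iff.mpr hNq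
    have hJ0 : ∀ᵐ t : ℝ, t ∉ {t : ℝ | 0 < t ∧ (⨆ n : ℕ, F (t + 1/(n+1 : ℝ))) < F t} :=
      measure_eq_zero_iff_ae_notMem.mp ((jumpCountable10 F hFmono).measure_zero _)
    have hmain : ∀ᵐ t ∂μ, F t * G t ≤ R := by
      rw [hμ, ae_restrict_iff' measurableSet_Ioi]
      filter_upwards [hN, hJ0] with t htN htJ htpos
      replace htpos : (0:ℝ) < t := htpos
      have hA : F t = ⨆ n : ℕ, F (t + 1/(n+1 : ℝ)) := by
        rcases le_or_gt (F t) (⨆ n : ℕ, F (t + 1/(n+1 : ℝ))) with hle | hlt2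
        · exact le_antisymm hle (iSup_le fun n =>
            hFmono t _ htpos (le_add_of_nonneg_right (by positivity)))
        · exact absurd ⟨htpos, hlt2⟩ htJ
      rw [hA, ENNReal.iSup_mul]
      refine iSup_le fun n => ?_
      have hεpos : (0:ℝ) < 1/(n+1 : ℝ) := by positivity
      have hs : ∃ s ∈ Ioo t (t + 1/(n+1 : ℝ)), F s * H s ≤ R := by
        by_contra hcon
        push_neg at hcon
        have hsub : Ioo t (t + 1/(n+1 : ℝ)) ⊆ {s : ℝ | ¬ F s * H s ≤ R} ∩ Ioi 0 := by
          intro s hsmem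
          exact ⟨not_le.mpr (hcon s hsmem), htpos.trans hsmem.1⟩
        have h0 : volume (Ioo t (t + 1/(n+1 : ℝ))) = 0 := measure_mono_null hsub hBadvol
        rw [Real.volume_Ioo, ENNReal.ofReal_eq_zero] at h0
        linarith
      obtain ⟨s, hsmem, hsR⟩ := hs
      obtain ⟨q, hq1, hq2⟩ := exists_rat_btwn hsmem.1
      have hGH : G t ≤ H q := by
        by_contra hgt
        exact htN q ⟨htpos, hq1, not_le.mp hgt⟩
      calc F (t + 1/(n+1 : ℝ)) * G t ≤ F s * H s :=
            mul_le_mul' (hFmono s _ (htpos.trans hsmem.1) hsmem.2.le)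
              (hGH.trans (Hmono hq2.le))
        _ ≤ R := hsR
    exact essSup_le_of_ae_le _ hmain
  · -- R ≤ L
    have hmain : ∀ᵐ t ∂μ, F t * H t ≤ L := by
      rw [hμ, ae_restrict_iff' measurableSet_Ioi]
      refine ae_of_all _ fun t ht => ?_
      calc F t * H t = essSup (fun τ => F t * G τ) (volume.restrict (Ioo (0:ℝ) t)) :=
            (essSup_const_mul).symm
        _ ≤ essSup (fun τ => F τ * G τ) (volume.restrict (Ioo (0:ℝ) t)) := by
            refine essSup_mono_ae ?_
            filter_upwards [ae_restrict_mem measurableSet_Ioo] with τ hτ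
            exact mul_le_mul_left (hFmono τ t hτ.1 hτ.2.le) _
        _ ≤ L := essSup_mono_measure' (Measure.restrict_mono Ioo_subset_Ioi_self le_rfl)
    exact essSup_le_of_ae_le _ hmain
end

section
/- Let U be an admissible function on [0,∞) (continuous, strictly increasing, U(0)=0, U(∞)=∞), and let w be a nonnegative measurable function on (0,∞). Define φ(t) = U(t) ∫_0^∞ w(τ)/(U(τ)+U(t)) dτ. If ∫_0^∞ w(τ)/(U(τ)+U(t)) dτ < ∞ for all t > 0, ∫_0^1 w(τ)/U(τ) dτ = ∞, and ∫_1^∞ w(τ) dτ = ∞, then φ is non-degenerate: lim_{t→0+} φ(t) = 0, lim_{t→∞} 1/φ(t) = 0, lim_{t→∞} φ(t)/U(t) = 0, and lim_{t→0+} U(t)/φ(t) = 0. -/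
/-!
Put `c = ofReal ∘ U`, let `μ` be Lebesgue measure on `(0, ∞)` and `S(s) = ∫ w / (c + s) dμ`.
Then `fundFun U w t = s * S(s)` with `s = c t`, and `s → 0` as `t → 0⁺`, `s → ∞` as `t → ∞`.
Both `s * S(s) → 0` as `s → 0` and `S(s) → 0` as `s → ∞` follow by dominated convergence,
the integrand at `t = 1` being a dominating function of finite integral. Both `S(s) → ∞` as
`s → 0` and `s * S(s) → ∞` as `s → ∞` follow from Fatou's lemma, since the pointwise limits
of the integrands, `w / c` and `w`, have infinite integral.
-/

open MeasureTheory ENNReal Set Filter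

noncomputable def fundFun (U : ℝ → ℝ) (w : ℝ → ℝ≥0∞) (t : ℝ) : ℝ≥0∞ :=
  ENNReal.ofReal (U t) * ∫⁻ τ in Ioi (0 : ℝ),
    w τ / (ENNReal.ofReal (U τ) + ENNReal.ofReal (U t))

open scoped Topology

namespace ENNReal

theorem div_add_self_eq_inv {x : ℝ≥0∞} (a : ℝ≥0∞) (hx₀ : x ≠ 0) (hx : x ≠ ∞) :
    x / (a + x) = (a / x + 1)⁻¹ := by
  rw [← ENNReal.div_self hx₀ hx, ← ENNReal.add_div, ENNReal.inv_div (.inl hx) (.inl hx₀)]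

theorem div_add_self_le_div_add_self {x y : ℝ≥0∞} (a : ℝ≥0∞) (hxy : x ≤ y) (hy : y ≠ ∞) :
    x / (a + x) ≤ y / (a + y) := by
  rcases eq_or_ne x 0 with rfl | hx₀
  · simp
  have hy₀ : y ≠ 0 := (pos_of_ne_zero hx₀ |>.trans_le hxy).ne'
  rw [div_add_self_eq_inv a hx₀ (ne_top_of_le_ne_top hy hxy), div_add_self_eq_inv a hy₀ hy]
  gcongr

theorem div_mul_cancel_left {a : ℝ≥0∞} (b : ℝ≥0∞) (ha₀ : a ≠ 0) (ha : a ≠ ∞) :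
    a / (a * b) = b⁻¹ := by
  rw [div_eq_mul_inv, ENNReal.mul_inv (.inl ha₀) (.inl ha), ENNReal.mul_inv_cancel_left ha₀ ha]

/-- The limit is taken along `s < ∞` because `∞ / (a + ∞) = 0`. -/
theorem tendsto_div_add_self_nhds_top {a : ℝ≥0∞} (ha : a ≠ ∞) :
    Tendsto (fun s => s / (a + s)) (𝓝[<] ∞) (𝓝 1) := by
  have hlim : Tendsto (fun s => (a / s + 1)⁻¹) (𝓝[<] ∞) (𝓝 (a / ∞ + 1)⁻¹) :=
    (((ENNReal.Tendsto.const_div tendsto_id (.inr ha)).add_const 1).inv).mono_left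
      nhdsWithin_le_nhds
  rw [ENNReal.div_top, zero_add, inv_one] at hlim
  refine hlim.congr' ?_
  filter_upwards [self_mem_nhdsWithin, nhdsWithin_le_nhds (Ioi_mem_nhds zero_lt_top)]
    with s hs hs₀
  exact (div_add_self_eq_inv a (ne_of_gt hs₀) hs.ne).symm

end ENNReal

namespace MeasureTheory

variable {α : Type*} [MeasurableSpace α] {μ : Measure α}

theorem tendsto_lintegral_top_of_ae_tendsto {ι : Type*} {l : Filter ι} [l.IsCountablyGenerated]
    {F : ι → α → ℝ≥0∞} {f : α → ℝ≥0∞} (hF : ∀ i, AEMeasurable (F i) μ)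
    (hlim : ∀ᵐ a ∂μ, Tendsto (fun i => F i a) l (𝓝 (f a))) (hf : ∫⁻ a, f a ∂μ = ∞) :
    Tendsto (fun i => ∫⁻ a, F i a ∂μ) l (𝓝 ∞) := by
  rcases l.eq_or_neBot with rfl | _
  · exact tendsto_bot
  refine tendsto_of_le_liminf_of_limsup_le ?_ le_top
  calc ∞ = ∫⁻ a, liminf (fun i => F i a) l ∂μ := by
        rw [← hf]; exact lintegral_congr_ae (hlim.mono fun a ha => ha.liminf_eq.symm)
    _ ≤ _ := lintegral_liminf_le' hF

/-- The Stieltjes transform, at `s`, of the pushforward of `w • μ` under `c`. -/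
noncomputable def stieltjesTransform (μ : Measure α) (w c : α → ℝ≥0∞) (s : ℝ≥0∞) : ℝ≥0∞ :=
  ∫⁻ a, w a / (c a + s) ∂μ

section StieltjesTransform

variable {w c : α → ℝ≥0∞}

theorem mul_stieltjesTransform {s : ℝ≥0∞} (hs : s ≠ ∞) :
    s * stieltjesTransform μ w c s = ∫⁻ a, w a * (s / (c a + s)) ∂μ := by
  rw [stieltjesTransform, ← lintegral_const_mul' _ _ hs]
  simp only [div_eq_mul_inv, mul_left_comm]

variable (hw : AEMeasurable w μ) (hc : AEMeasurable c μ)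
include hw hc

theorem ae_ne_top_of_stieltjesTransform_ne_top (hc_top : ∀ᵐ a ∂μ, c a ≠ ∞) {s : ℝ≥0∞}
    (hs : s ≠ ∞) (hfin : stieltjesTransform μ w c s ≠ ∞) : ∀ᵐ a ∂μ, w a ≠ ∞ := by
  filter_upwards [ae_lt_top' (hw.div (hc.add_const s)) hfin, hc_top] with a ha hca
  exact fun hwa => by simp [hwa, ENNReal.top_div, hca, hs] at ha

theorem tendsto_stieltjesTransform_nhds_top (hc_top : ∀ᵐ a ∂μ, c a ≠ ∞) {s₀ : ℝ≥0∞}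
    (hs₀ : s₀ ≠ ∞) (hfin : stieltjesTransform μ w c s₀ ≠ ∞) :
    Tendsto (stieltjesTransform μ w c) (𝓝 ∞) (𝓝 0) := by
  have hw_top := ae_ne_top_of_stieltjesTransform_ne_top hw hc hc_top hs₀ hfin
  have := tendsto_lintegral_filter_of_dominated_convergence' (μ := μ)
    (F := fun s a => w a / (c a + s)) (f := 0) (fun a => w a / (c a + s₀))
    (.of_forall fun s => hw.div (hc.add_const s))
    (by filter_upwards [eventually_ge_nhds hs₀.lt_top] with s hs
        exact ae_of_all _ fun a => by gcongr)
    hfin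
    (by filter_upwards [hw_top] with a ha
        have := ENNReal.Tendsto.const_div
          ((tendsto_const_nhds (x := c a)).add (tendsto_id (x := 𝓝 ∞))) (.inr ha)
        rwa [add_top, div_top] at this)
  simp only [Pi.zero_apply, lintegral_zero] at this
  exact this

theorem tendsto_stieltjesTransform_nhds_zero (hc_top : ∀ᵐ a ∂μ, c a ≠ ∞)
    (h : ∫⁻ a, w a / c a ∂μ = ∞) : Tendsto (stieltjesTransform μ w c) (𝓝 0) (𝓝 ∞) := by
  refine tendsto_lintegral_top_of_ae_tendsto (F := fun s a => w a / (c a + s))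
    (fun s => hw.div (hc.add_const s)) ?_ h
  filter_upwards [hc_top] with a ha
  have := ENNReal.Tendsto.const_div (a := w a)
    ((tendsto_const_nhds (x := c a)).add (tendsto_id (x := 𝓝 0))) (.inl (by simpa))
  rwa [add_zero] at this

theorem tendsto_mul_stieltjesTransform_nhds_zero (hc_zero : ∀ᵐ a ∂μ, c a ≠ 0)
    (hc_top : ∀ᵐ a ∂μ, c a ≠ ∞) {s₀ : ℝ≥0∞} (hs₀ : s₀ ≠ 0) (hs₀' : s₀ ≠ ∞)
    (hfin : stieltjesTransform μ w c s₀ ≠ ∞) :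
    Tendsto (fun s => s * stieltjesTransform μ w c s) (𝓝 0) (𝓝 0) := by
  have hw_top := ae_ne_top_of_stieltjesTransform_ne_top hw hc hc_top hs₀' hfin
  have hs_le : ∀ᶠ s in 𝓝 0, s ≤ s₀ := eventually_le_nhds (pos_of_ne_zero hs₀)
  have := tendsto_lintegral_filter_of_dominated_convergence' (μ := μ)
    (F := fun s a => w a * (s / (c a + s))) (f := fun _ => 0) (fun a => w a * (s₀ / (c a + s₀)))
    (.of_forall fun s => hw.mul (aemeasurable_const.div (hc.add_const s)))
    (by filter_upwards [hs_le] with s hs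
        refine ae_of_all _ fun a => ?_
        gcongr w a * ?_
        exact ENNReal.div_add_self_le_div_add_self _ hs hs₀')
    (by rw [← mul_stieltjesTransform hs₀']; exact mul_ne_top hs₀' hfin)
    (by filter_upwards [hw_top, hc_zero] with a hwa hca
        have := ENNReal.Tendsto.div (tendsto_id (x := 𝓝 0))
          (.inr (by simpa)) ((tendsto_const_nhds (x := c a)).add tendsto_id) (.inr zero_ne_top)
        simpa using ENNReal.Tendsto.const_mul this (.inr hwa))
  simp only [lintegral_zero] at this
  refine this.congr' ?_
  filter_upwards [hs_le] with s hs
  exact (mul_stieltjesTransform (ne_top_of_le_ne_top hs₀' hs)).symm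

theorem tendsto_mul_stieltjesTransform_nhdsLT_top (hc_top : ∀ᵐ a ∂μ, c a ≠ ∞)
    (h : ∫⁻ a, w a ∂μ = ∞) :
    Tendsto (fun s => s * stieltjesTransform μ w c s) (𝓝[<] ∞) (𝓝 ∞) := by
  refine (tendsto_lintegral_top_of_ae_tendsto (F := fun s a => w a * (s / (c a + s)))
    (fun s => hw.mul (aemeasurable_const.div (hc.add_const s))) ?_ h).congr' ?_
  · filter_upwards [hc_top] with a ha
    simpa using ENNReal.Tendsto.const_mul (ENNReal.tendsto_div_add_self_nhds_top ha)
      (.inl one_ne_zero)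
  · filter_upwards [self_mem_nhdsWithin] with s hs
    exact (mul_stieltjesTransform hs.ne).symm

end StieltjesTransform
end MeasureTheory

theorem stmt14 (U : ℝ → ℝ)
    (hUcont : ContinuousOn U (Ici (0 : ℝ))) (hUmono : StrictMonoOn U (Ici (0 : ℝ)))
    (hU0 : U 0 = 0) (hUtop : Tendsto U atTop atTop)
    (w : ℝ → ℝ≥0∞) (hw : Measurable w)
    (hfin : ∀ t : ℝ, 0 < t →
      (∫⁻ τ in Ioi (0 : ℝ), w τ / (ENNReal.ofReal (U τ) + ENNReal.ofReal (U t))) < ∞)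
    (h01 : (∫⁻ τ in Ioo (0 : ℝ) 1, w τ / ENNReal.ofReal (U τ)) = ∞)
    (h1top : (∫⁻ τ in Ioi (1 : ℝ), w τ) = ∞) :
    Tendsto (fundFun U w) (nhdsWithin 0 (Ioi (0 : ℝ))) (nhds 0) ∧
    Tendsto (fun t => (fundFun U w t)⁻¹) atTop (nhds 0) ∧
    Tendsto (fun t => fundFun U w t / ENNReal.ofReal (U t)) atTop (nhds 0) ∧
    Tendsto (fun t => ENNReal.ofReal (U t) / fundFun U w t)
      (nhdsWithin 0 (Ioi (0 : ℝ))) (nhds 0) := by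
  set μ := volume.restrict (Ioi (0 : ℝ))
  set c : ℝ → ℝ≥0∞ := fun τ => ENNReal.ofReal (U τ)
  have hφ : ∀ t, fundFun U w t = c t * stieltjesTransform μ w c (c t) := fun _ => rfl
  have hc_pos : ∀ t, 0 < t → c t ≠ 0 := fun t ht =>
    (ENNReal.ofReal_pos.2 (hU0 ▸ hUmono self_mem_Ici ht.le ht)).ne'
  have hc_meas : AEMeasurable c μ :=
    ((hUcont.mono Ioi_subset_Ici_self).aemeasurable measurableSet_Ioi).ennreal_ofReal
  have hc_zero : ∀ᵐ τ ∂μ, c τ ≠ 0 := (ae_restrict_mem measurableSet_Ioi).mono hc_pos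
  have hc_top : ∀ᵐ τ ∂μ, c τ ≠ ∞ := ae_of_all _ fun _ => ofReal_ne_top
  have hc_nhds_zero : Tendsto c (𝓝[>] 0) (𝓝 0) := by
    have := ENNReal.tendsto_ofReal
      ((hUcont 0 self_mem_Ici).mono_left (nhdsWithin_mono _ Ioi_subset_Ici_self))
    rwa [hU0, ofReal_zero] at this
  have hc_atTop : Tendsto c atTop (𝓝[<] ∞) := tendsto_nhdsWithin_iff.2
    ⟨ENNReal.tendsto_ofReal_atTop.comp hUtop, .of_forall fun _ => ofReal_lt_top⟩
  have hfin₁ : stieltjesTransform μ w c (c 1) ≠ ∞ := (hfin 1 one_pos).ne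
  have h_div : ∫⁻ τ, w τ / c τ ∂μ = ∞ := top_unique (h01 ▸ lintegral_mono_set Ioo_subset_Ioi_self)
  have h_w : ∫⁻ τ, w τ ∂μ = ∞ :=
    top_unique (h1top ▸ lintegral_mono_set (Ioi_subset_Ioi zero_le_one))
  simp only [hφ]
  refine ⟨?_, ?_, ?_, ?_⟩
  · exact (tendsto_mul_stieltjesTransform_nhds_zero hw.aemeasurable hc_meas hc_zero hc_top
      (hc_pos 1 one_pos) ofReal_ne_top hfin₁).comp hc_nhds_zero
  · simpa using ((tendsto_mul_stieltjesTransform_nhdsLT_top hw.aemeasurable hc_meas hc_top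
      h_w).comp hc_atTop).inv
  · refine ((tendsto_stieltjesTransform_nhds_top hw.aemeasurable hc_meas hc_top ofReal_ne_top
      hfin₁).comp (hc_atTop.mono_right nhdsWithin_le_nhds)).congr' ?_
    filter_upwards [eventually_gt_atTop 0] with t ht
    rw [Function.comp_apply, mul_comm, ENNReal.mul_div_cancel_right (hc_pos t ht) ofReal_ne_top]
  · have := ((tendsto_stieltjesTransform_nhds_zero hw.aemeasurable hc_meas hc_top
      h_div).comp hc_nhds_zero).inv
    rw [inv_top] at this
    refine this.congr' ?_
    filter_upwards [self_mem_nhdsWithin] with t ht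
    exact (ENNReal.div_mul_cancel_left _ (hc_pos t ht) ofReal_ne_top).symm
end
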